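/- Let M̃_{(i,j)} be the Metropolis–Hastings chain on ℝ^d with symmetric Gaussian proposal q(x,y) = N(y; x, ηI) targeting the Gaussian density p̃_{(i,j)} of N(μ_j, β_i⁻¹Σ), where 0 < β_i ≤ 1. Let X⁰ = { x ∈ ℝ^d : ‖x‖ ≤ R } and suppose 0 < η ≤ R². Then the X⁰-restricted spectral gap of M̃_{(i,j)} satisfies SpecGap_{X⁰}(M̃_{(i,j)}) ≥ γ_min^{d/2} η^{3/2} / (13 R^{d+3}), where γ_min is the smallest eigenvalue of Σ. -/

import Mathlib

/-!
Join `x` and `y = x + L • v` in the ball `B` by the `L` equal steps `zⱼ = x + j • v`. By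
Cauchy–Schwarz, `(g x - g y)² ≤ L ∑ⱼ (g zⱼ - g zⱼ₊₁)²`. The ball is convex, so every `zⱼ` lies in
`B`; the Gaussian density `p` is quasi-concave (its logarithm is concave), so
`p x * p y ≤ (max p) * min (p zⱼ) (p zⱼ₊₁)`; and `‖v‖ ≤ 2R/L`, so the proposal density between
consecutive points is at least `(2πη)^(-d/2) exp(-2R²/(ηL²))`. The change of variables
`y = x + L • v` costs `L^d`, and the shift `x ↦ zⱼ` turns each summand into the Dirichlet
integrand. Hence the restricted variance is at most `L^(d+2) · max p / min q` times the restricted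
Dirichlet form. Finally `det Σ ≥ γ_min^d`, and an integer `L` close to `R/√η` makes this constant
at most `13 R^(d+3) / (γ_min^(d/2) η^(3/2))`.
-/

open MeasureTheory Matrix

noncomputable section

/-- Euclidean norm of a vector in `ℝ^d`. -/
def euclNorm {d : ℕ} (v : Fin d → ℝ) : ℝ := Real.sqrt (∑ k, v k ^ 2)

/-- Quadratic form `v ↦ vᵀ Σ⁻¹ v`. -/
def quadForm {d : ℕ} (Sig : Matrix (Fin d) (Fin d) ℝ) (v : Fin d → ℝ) : ℝ :=
  v ⬝ᵥ (Sig⁻¹ *ᵥ v)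

/-- Density of the Gaussian distribution `N(μ, β⁻¹ Σ)` on `ℝ^d`. -/
def gaussDens {d : ℕ} (Sig : Matrix (Fin d) (Fin d) ℝ) (β : ℝ) (μ x : Fin d → ℝ) : ℝ :=
  (β / (2 * Real.pi)) ^ ((d : ℝ) / 2) / Real.sqrt Sig.det *
    Real.exp (-(β / 2) * quadForm Sig (x - μ))

/-- Density of the symmetric Gaussian proposal `N(y; x, ηI)`. -/
def propDens (d : ℕ) (η : ℝ) (x y : Fin d → ℝ) : ℝ :=
  (2 * Real.pi * η) ^ (-(d : ℝ) / 2) * Real.exp (-(∑ k, (y k - x k) ^ 2) / (2 * η))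

/-- `X⁰`-restricted Dirichlet form of the Metropolis–Hastings chain with symmetric
Gaussian proposal of step size `η` and target density `π`. -/
def mhRestDirichlet {d : ℕ} (η : ℝ) (π : (Fin d → ℝ) → ℝ) (X0 : Set (Fin d → ℝ))
    (g : (Fin d → ℝ) → ℝ) : ℝ :=
  (1 / 2) * ∫ x in X0, ∫ y in X0, (g x - g y) ^ 2 * propDens d η x y * min (π x) (π y)

/-- `X⁰`-restricted variance with respect to the density `π`. -/
def restVarDens {d : ℕ} (π : (Fin d → ℝ) → ℝ) (X0 : Set (Fin d → ℝ))
    (g : (Fin d → ℝ) → ℝ) : ℝ :=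
  (1 / 2) * ∫ x in X0, ∫ y in X0, (g x - g y) ^ 2 * π x * π y

open Set Function Real Module
open scoped ENNReal

lemma Real.two_mul_sub_one_div_add_one_le_log {y : ℝ} (hy : 1 ≤ y) :
    2 * (y - 1) / (y + 1) ≤ log y := by
  have h := le_hasSum (hasSum_log_one_add (sub_nonneg.2 hy)) 0 fun j _ => by
    have : 0 ≤ (y - 1) / (y - 1 + 2) := div_nonneg (by linarith) (by linarith)
    positivity
  rw [add_sub_cancel] at h
  refine le_of_eq_of_le ?_ h
  norm_num
  ring

lemma Real.exp_div_le_of_pow_le {p q : ℕ} (hq : q ≠ 0) {c : ℝ} (hc : 0 ≤ c)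
    (h : (2.7182818286 : ℝ) ^ p ≤ c ^ q) : exp (p / q) ≤ c := by
  refine le_of_pow_le_pow_left₀ hq hc ?_
  rw [← exp_nat_mul, mul_div_cancel₀ _ (Nat.cast_ne_zero.2 hq), ← exp_one_pow]
  exact (pow_le_pow_left₀ (exp_pos 1).le exp_one_lt_d9.le p).trans h

lemma Real.rpow_natCast_div_two_sq {x : ℝ} (hx : 0 ≤ x) (n : ℕ) :
    (x ^ ((n : ℝ) / 2)) ^ 2 = x ^ n := by
  rw [← rpow_mul_natCast hx, ← rpow_natCast]; norm_num

lemma Real.rpow_neg_natCast_div_two_sq {x : ℝ} (hx : 0 ≤ x) (n : ℕ) :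
    (x ^ (-(n : ℝ) / 2)) ^ 2 = (x ^ n)⁻¹ := by
  rw [neg_div, rpow_neg hx, inv_pow, rpow_natCast_div_two_sq hx]

lemma ENNReal.ofReal_sq_sub_le_mul_sum (f : ℕ → ℝ) (L : ℕ) :
    ENNReal.ofReal ((f 0 - f L) ^ 2)
      ≤ L * ∑ j ∈ Finset.range L, ENNReal.ofReal ((f j - f (j + 1)) ^ 2) := by
  rw [← ENNReal.ofReal_natCast, ← ENNReal.ofReal_sum_of_nonneg fun j _ => sq_nonneg _,
    ← ENNReal.ofReal_mul (Nat.cast_nonneg L), ← Finset.sum_range_sub']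
  have h := sq_sum_le_card_mul_sum_sq (s := Finset.range L) (f := fun j => f j - f (j + 1))
  exact ENNReal.ofReal_le_ofReal (by simpa using h)

/-- With `x = t / k ^ 2`, the quadratic condition is what `2(x-1)/(x+1) ≤ log x` needs to give
`4x - 5 ≤ (m+1) log x`; together with `e⁵ ≤ 169` this is the claim. -/
lemma pow_mul_exp_le_of_quadratic_le {m k : ℕ} (hk : 1 ≤ k) {t : ℝ} (hx : 1 ≤ t / k ^ 2)
    (h : (4 * (t / k ^ 2) - 5) * (t / k ^ 2 + 1) ≤ 2 * (m + 1) * (t / k ^ 2 - 1)) :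
    (k : ℝ) ^ (2 * m) * exp (4 * t / k ^ 2) ≤ 169 * t ^ (m + 1) := by
  set x := t / k ^ 2 with hxdef
  clear_value x
  have hk2 : (1 : ℝ) ≤ (k : ℝ) ^ 2 := one_le_pow₀ (by exact_mod_cast hk)
  have ht : t = x * k ^ 2 := by rw [hxdef, div_mul_cancel₀ _ (by positivity)]
  have hlog : 4 * x - 5 ≤ (m + 1) * log x := by
    have hx1 : 0 < x + 1 := by linarith
    have h2 : 4 * x - 5 ≤ (m + 1) * (2 * (x - 1) / (x + 1)) := by
      rw [mul_div_assoc', le_div_iff₀ hx1]; linarith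
    exact h2.trans
      (mul_le_mul_of_nonneg_left (two_mul_sub_one_div_add_one_le_log hx) (by positivity))
  have hexp : exp (4 * x) ≤ 169 * x ^ (m + 1) := calc
    exp (4 * x) = exp 5 * exp (4 * x - 5) := by rw [← exp_add]; ring_nf
    _ ≤ 169 * exp ((m + 1 : ℕ) * log x) := by
      gcongr
      · simpa using exp_div_le_of_pow_le (p := 5) one_ne_zero (c := 169) (by norm_num) (by norm_num)
      · push_cast; exact hlog
    _ = 169 * x ^ (m + 1) := by rw [exp_nat_mul, exp_log (by linarith)]
  calc (k : ℝ) ^ (2 * m) * exp (4 * t / k ^ 2) = (k : ℝ) ^ (2 * m) * exp (4 * x) := by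
        rw [hxdef, mul_div_assoc]
    _ ≤ (k : ℝ) ^ (2 * m) * (169 * x ^ (m + 1)) := by gcongr
    _ ≤ (k : ℝ) ^ (2 * m) * (k : ℝ) ^ 2 * (169 * x ^ (m + 1)) := by
        gcongr; exact le_mul_of_one_le_right (by positivity) hk2
    _ = 169 * t ^ (m + 1) := by rw [ht]; ring

lemma pow_mul_exp_le_of_le {m L : ℕ} (hm : 3 ≤ m) {t₀ t : ℝ} (h₀ : 0 < t₀) (ht₀ : t₀ ≤ t)
    (htL : t ≤ (L : ℝ) ^ 2)
    (h : (L : ℝ) ^ (2 * m) * exp (4 * t₀ / L ^ 2) ≤ 169 * t₀ ^ (m + 1)) :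
    (L : ℝ) ^ (2 * m) * exp (4 * t / L ^ 2) ≤ 169 * t ^ (m + 1) := by
  have ht : 0 < t := h₀.trans_le ht₀
  have hgrowth : 4 * (t - t₀) / L ^ 2 ≤ (m + 1 : ℕ) * log (t / t₀) := calc
    4 * (t - t₀) / L ^ 2 ≤ 4 * (t - t₀) / t := by gcongr
    _ ≤ (m + 1 : ℕ) * (1 - (t / t₀)⁻¹) := by
      rw [inv_div, div_le_iff₀ ht]; push_cast
      have : (4 : ℝ) ≤ m + 1 := by norm_cast; omega
      nlinarith [sub_nonneg.2 ht₀, mul_sub (t : ℝ) 1 (t₀ / t), div_mul_cancel₀ t₀ ht.ne']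
    _ ≤ (m + 1 : ℕ) * log (t / t₀) := by
      gcongr; exact one_sub_inv_le_log_of_pos (by positivity)
  calc (L : ℝ) ^ (2 * m) * exp (4 * t / L ^ 2)
      = (L : ℝ) ^ (2 * m) * exp (4 * t₀ / L ^ 2) * exp (4 * (t - t₀) / L ^ 2) := by
        rw [mul_assoc, ← exp_add]; ring_nf
    _ ≤ 169 * t₀ ^ (m + 1) * (t / t₀) ^ (m + 1) := by
        gcongr
        rw [← exp_log (by positivity : 0 < t / t₀), ← exp_nat_mul]
        exact exp_le_exp.2 hgrowth
    _ = 169 * t ^ (m + 1) := by rw [div_pow, mul_assoc, mul_div_cancel₀ _ (by positivity)]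

lemma two_pow_mul_exp_le {m : ℕ} (hm : 3 ≤ m) {x : ℝ} (hx1 : 1 ≤ x) (hx4 : x < 4)
    (hA : 2 * (m + 1) * (x - 1) < (4 * x - 5) * (x + 1)) :
    ((2 : ℕ) : ℝ) ^ (2 * m) * exp (4 * x / (2 : ℕ) ^ 2) ≤ 169 * x ^ (m + 1) := by
  have hm8 : m ≤ 8 := by
    by_contra! hm9
    have : (9 : ℝ) ≤ m := by exact_mod_cast hm9
    nlinarith
  have hx : 1 + (m : ℝ) / 4 ≤ x := by
    by_contra! h
    interval_cases m <;> norm_num at hA h <;>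
      nlinarith [mul_nonneg (sub_nonneg.2 hx1) (sub_nonneg.2 h.le)]
  refine pow_mul_exp_le_of_le hm (t₀ := 1 + m / 4) (by positivity) hx (by norm_num; linarith) ?_
  have hexp : exp (4 * (1 + m / 4) / (2 : ℕ) ^ 2) ≤ 2.7182818286 * 1.2841 ^ m := by
    rw [show 4 * (1 + m / 4) / ((2 : ℕ) : ℝ) ^ 2 = 1 + m * (1 / 4) by push_cast; ring,
      exp_add, exp_nat_mul]
    gcongr
    · exact exp_one_lt_d9.le
    · simpa using exp_div_le_of_pow_le (p := 1) (q := 4) (by norm_num) (c := 1.2841)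
        (by norm_num) (by norm_num)
  refine (mul_le_mul_of_nonneg_left hexp (by positivity)).trans ?_
  interval_cases m <;> norm_num

lemma three_pow_mul_exp_le {m : ℕ} (hm : 3 ≤ m) {x : ℝ} (hx1 : 1 ≤ x) (hx : 4 * x < 9)
    (hA : 2 * (m + 1) * (x - 1) < (4 * x - 5) * (x + 1)) :
    ((3 : ℕ) : ℝ) ^ (2 * m) * exp (4 * (4 * x) / (3 : ℕ) ^ 2) ≤ 169 * (4 * x) ^ (m + 1) := by
  have hm4 : m ≤ 4 := by
    by_contra! hm5
    have : (5 : ℝ) ≤ m := by exact_mod_cast hm5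
    nlinarith
  refine pow_mul_exp_le_of_le hm (t₀ := 4) (by norm_num) (by linarith) (by norm_num; linarith) ?_
  have hexp : exp (4 * 4 / (3 : ℕ) ^ 2) ≤ 7.39 := by
    refine (exp_le_exp.2 (by norm_num : 4 * 4 / ((3 : ℕ) : ℝ) ^ 2 ≤ (2 : ℕ) / (1 : ℕ))).trans ?_
    exact exp_div_le_of_pow_le (by norm_num) (by norm_num) (by norm_num)
  refine (mul_le_mul_of_nonneg_left hexp (by positivity)).trans ?_
  interval_cases m <;> norm_num

/-- `L = ⌊√t⌋` works unless the quadratic condition fails; this leaves `⌊√t⌋ ∈ {1, 2}` and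
finitely many `m`, where `L = ⌊√t⌋ + 1` is checked at the left end of the range of `t` and
propagated by `pow_mul_exp_le_of_le`. -/
theorem exists_pow_mul_exp_le {m : ℕ} (hm : 3 ≤ m) {t : ℝ} (ht : 1 ≤ t) :
    ∃ L : ℕ, 1 ≤ L ∧ (L : ℝ) ^ (2 * m) * exp (4 * t / L ^ 2) ≤ 169 * t ^ (m + 1) := by
  obtain ⟨k, hk, hkt, htk⟩ : ∃ k : ℕ, 1 ≤ k ∧ (k : ℝ) ^ 2 ≤ t ∧ t < ((k : ℝ) + 1) ^ 2 := by
    have h := Real.sq_sqrt (zero_le_one.trans ht)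
    refine ⟨⌊√t⌋₊, Nat.le_floor (by simpa using Real.one_le_sqrt.2 ht), ?_, ?_⟩
    · nlinarith [Nat.floor_le (Real.sqrt_nonneg t), Real.sqrt_nonneg t]
    · nlinarith [Nat.lt_floor_add_one √t, Real.sqrt_nonneg t]
  obtain ⟨x, hx1, rfl⟩ : ∃ x : ℝ, 1 ≤ x ∧ t = x * k ^ 2 :=
    ⟨t / k ^ 2, by rwa [le_div_iff₀ (by positivity), one_mul], by field_simp⟩
  by_cases hA : (4 * x - 5) * (x + 1) ≤ 2 * (m + 1) * (x - 1)
  · refine ⟨k, hk, pow_mul_exp_le_of_quadratic_le hk ?_ ?_⟩ <;>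
      rwa [mul_div_cancel_right₀ _ (by positivity)]
  rw [not_le] at hA
  have hk2 : k ≤ 2 := by
    by_contra! hk3
    have : (3 : ℝ) ≤ k := by exact_mod_cast hk3
    have : 9 * x < 16 := by nlinarith
    have : (3 : ℝ) ≤ m := by exact_mod_cast hm
    nlinarith
  obtain rfl | rfl : k = 1 ∨ k = 2 := by omega
  · refine ⟨2, by norm_num, ?_⟩
    simpa using two_pow_mul_exp_le hm hx1 (by norm_num at htk; linarith) hA
  · refine ⟨3, by norm_num, ?_⟩
    have h := three_pow_mul_exp_le hm hx1 (by norm_num at htk; linarith) hA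
    norm_num at h ⊢
    rwa [mul_comm x]

section DoubleIntegrals

variable {α : Type*} [MeasurableSpace α] {μ : Measure α}

lemma lintegral_lintegral_indicator_prod {s t : Set α} (hs : MeasurableSet s)
    (ht : MeasurableSet t) (f : α → α → ℝ≥0∞) :
    ∫⁻ x, ∫⁻ y, (s ×ˢ t).indicator (uncurry f) (x, y) ∂μ ∂μ
      = ∫⁻ x in s, ∫⁻ y in t, f x y ∂μ ∂μ := by
  rw [← lintegral_indicator hs]
  refine lintegral_congr fun x => ?_
  by_cases hx : x ∈ s
  · rw [indicator_of_mem hx, ← lintegral_indicator ht]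
    refine lintegral_congr fun y => ?_
    by_cases hy : y ∈ t <;> simp [indicator, hx, hy]
  · simp [indicator, hx]

lemma setLIntegral_setLIntegral_sq_sub_mul_ne_top {s : Set α} (hs : μ s ≠ ∞) {g : α → ℝ}
    {ρ : α → ℝ≥0∞} (hgρ : Measurable fun x => ENNReal.ofReal (g x ^ 2) * ρ x)
    (hfin : ∫⁻ x, ENNReal.ofReal (g x ^ 2) * ρ x ∂μ ≠ ∞) {W : α → α → ℝ≥0∞} {C : ℝ≥0∞}
    (hC : C ≠ ∞) (hW : ∀ x y, W x y ≤ C * min (ρ x) (ρ y)) :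
    ∫⁻ x in s, ∫⁻ y in s, ENNReal.ofReal ((g x - g y) ^ 2) * W x y ∂μ ∂μ ≠ ∞ := by
  set h := fun x => ENNReal.ofReal (g x ^ 2) * ρ x
  have hpt : ∀ x y, ENNReal.ofReal ((g x - g y) ^ 2) * W x y ≤ 2 * C * (h x + h y) := by
    intro x y
    have hsq : ENNReal.ofReal ((g x - g y) ^ 2)
        ≤ 2 * ENNReal.ofReal (g x ^ 2) + 2 * ENNReal.ofReal (g y ^ 2) := by
      rw [← ENNReal.ofReal_ofNat 2, ← ENNReal.ofReal_mul zero_le_two,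
        ← ENNReal.ofReal_mul zero_le_two, ← ENNReal.ofReal_add (by positivity) (by positivity)]
      exact ENNReal.ofReal_le_ofReal (by nlinarith [sq_nonneg (g x + g y)])
    calc ENNReal.ofReal ((g x - g y) ^ 2) * W x y
        ≤ (2 * ENNReal.ofReal (g x ^ 2) + 2 * ENNReal.ofReal (g y ^ 2)) * W x y := by gcongr
      _ ≤ 2 * ENNReal.ofReal (g x ^ 2) * (C * ρ x) + 2 * ENNReal.ofReal (g y ^ 2) * (C * ρ y) := by
        rw [add_mul]
        gcongr
        · exact (hW x y).trans (by gcongr; exact min_le_left _ _)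
        · exact (hW x y).trans (by gcongr; exact min_le_right _ _)
      _ = 2 * C * (h x + h y) := by ring
  have hI : ∫⁻ x in s, h x ∂μ ≠ ∞ := ne_top_of_le_ne_top hfin (setLIntegral_le_lintegral _ _)
  refine ne_top_of_le_ne_top ?_ (lintegral_mono fun x => lintegral_mono fun y => hpt x y)
  simp_rw [lintegral_const_mul' _ _ (by finiteness : 2 * C ≠ ∞),
    lintegral_add_left measurable_const, setLIntegral_const, lintegral_add_right _ measurable_const,
    lintegral_mul_const _ hgρ, setLIntegral_const]
  finiteness

lemma setIntegral_setIntegral_eq_toReal [SFinite μ] {s : Set α} {F : α → α → ℝ}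
    (hF : Measurable (uncurry F)) (hF0 : ∀ x y, 0 ≤ F x y)
    (hfin : ∫⁻ x in s, ∫⁻ y in s, ENNReal.ofReal (F x y) ∂μ ∂μ ≠ ∞) :
    ∫ x in s, ∫ y in s, F x y ∂μ ∂μ
      = (∫⁻ x in s, ∫⁻ y in s, ENNReal.ofReal (F x y) ∂μ ∂μ).toReal := by
  have hmeas : Measurable fun x => ∫⁻ y in s, ENNReal.ofReal (F x y) ∂μ :=
    (ENNReal.measurable_ofReal.comp hF).lintegral_prod_right'
  have hinner : ∀ x, ∫ y in s, F x y ∂μ = (∫⁻ y in s, ENNReal.ofReal (F x y) ∂μ).toReal :=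
    fun x => integral_eq_lintegral_of_nonneg_ae (ae_of_all _ (hF0 x))
      hF.of_uncurry_left.aestronglyMeasurable
  simp_rw [hinner]
  exact integral_toReal hmeas.aemeasurable (ae_lt_top hmeas hfin)

lemma setIntegral_setIntegral_le_of_setLIntegral [SFinite μ] {s : Set α} {F₁ F₂ : α → α → ℝ}
    (hF₁ : Measurable (uncurry F₁)) (hF₂ : Measurable (uncurry F₂)) (hF₁0 : ∀ x y, 0 ≤ F₁ x y)
    (hF₂0 : ∀ x y, 0 ≤ F₂ x y) {K : ℝ} (hK : 0 ≤ K)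
    (hfin : ∫⁻ x in s, ∫⁻ y in s, ENNReal.ofReal (F₂ x y) ∂μ ∂μ ≠ ∞)
    (hle : ∫⁻ x in s, ∫⁻ y in s, ENNReal.ofReal (F₁ x y) ∂μ ∂μ
      ≤ ENNReal.ofReal K * ∫⁻ x in s, ∫⁻ y in s, ENNReal.ofReal (F₂ x y) ∂μ ∂μ) :
    ∫ x in s, ∫ y in s, F₁ x y ∂μ ∂μ ≤ K * ∫ x in s, ∫ y in s, F₂ x y ∂μ ∂μ := by
  rw [setIntegral_setIntegral_eq_toReal hF₁ hF₁0 (ne_top_of_le_ne_top (by finiteness) hle),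
    setIntegral_setIntegral_eq_toReal hF₂ hF₂0 hfin, ← ENNReal.toReal_ofReal hK,
    ← ENNReal.toReal_mul]
  exact ENNReal.toReal_mono (by finiteness) hle

lemma MeasureTheory.MemLp.lintegral_sq_mul_ne_top {ρ : α → ℝ≥0∞} (hρ : Measurable ρ) {g : α → ℝ}
    (hg : Measurable g) (hgL : MemLp g 2 (μ.withDensity ρ)) :
    ∫⁻ x, ENNReal.ofReal (g x ^ 2) * ρ x ∂μ ≠ ∞ := by
  have h := hgL.integrable_sq.lintegral_lt_top.ne
  have hg2 : Measurable fun x => ENNReal.ofReal (g x ^ 2) := by fun_prop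
  rw [lintegral_withDensity_eq_lintegral_mul _ hρ hg2] at h
  simpa only [Pi.mul_apply, mul_comm] using h

end DoubleIntegrals

section HaarMeasure

variable {E : Type*} [NormedAddCommGroup E] [NormedSpace ℝ E]

lemma add_smul_mem_segment {L a : ℝ} (hL : 0 < L) (ha : 0 ≤ a) (haL : a ≤ L) (x v : E) :
    x + a • v ∈ segment ℝ x (x + L • v) := by
  rw [segment_eq_image']
  refine ⟨a / L, ⟨by positivity, (div_le_one hL).2 haL⟩, ?_⟩
  simp [smul_smul, div_mul_cancel₀ _ hL.ne']

lemma QuasiconcaveOn.min_le_of_mem_segment {s : Set E} {f : E → ℝ} (hf : QuasiconcaveOn ℝ s f)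
    {x y z : E} (hx : x ∈ s) (hy : y ∈ s) (hz : z ∈ segment ℝ x y) : min (f x) (f y) ≤ f z := by
  obtain ⟨a, b, ha, hb, hab, rfl⟩ := hz
  exact (quasiconcaveOn_iff_min_le.1 hf).2 hx hy ha hb hab

lemma indicator_sq_sub_mul_le_sum {B : Set E} (hB : Convex ℝ B) {g : E → ℝ}
    {W₁ W₂ : E → E → ℝ≥0∞} {L : ℕ} (hL : 0 < L) {C : ℝ≥0∞}
    (hW : ∀ x v, x ∈ B → x + (L : ℝ) • v ∈ B → ∀ j < L,
      W₁ x (x + (L : ℝ) • v) ≤ C * W₂ (x + (j : ℝ) • v) (x + ((j : ℝ) + 1) • v)) (x v : E) :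
    (B ×ˢ B).indicator (uncurry fun x y => ENNReal.ofReal ((g x - g y) ^ 2) * W₁ x y)
        (x, x + (L : ℝ) • v)
      ≤ L * C * ∑ j ∈ Finset.range L,
        (B ×ˢ B).indicator (uncurry fun x y => ENNReal.ofReal ((g x - g y) ^ 2) * W₂ x y)
          (x + (j : ℝ) • v, x + ((j : ℝ) + 1) • v) := by
  by_cases hxy : (x, x + (L : ℝ) • v) ∈ B ×ˢ B
  swap
  · rw [indicator_of_notMem hxy]; exact bot_le
  obtain ⟨hx, hy⟩ := hxy
  have hz : ∀ j : ℕ, j ≤ L → x + (j : ℝ) • v ∈ B := fun j hj =>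
    hB.segment_subset hx hy (add_smul_mem_segment (by exact_mod_cast hL) (by positivity)
      (by exact_mod_cast hj) x v)
  have htel := ENNReal.ofReal_sq_sub_le_mul_sum (fun j : ℕ => g (x + (j : ℝ) • v)) L
  simp only [Nat.cast_zero, zero_smul, add_zero, Nat.cast_add, Nat.cast_one] at htel
  rw [indicator_of_mem (mk_mem_prod hx hy)]
  calc ENNReal.ofReal ((g x - g (x + (L : ℝ) • v)) ^ 2) * W₁ x (x + (L : ℝ) • v)
      ≤ L * ∑ j ∈ Finset.range L, ENNReal.ofReal ((g (x + (j : ℝ) • v)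
          - g (x + ((j : ℝ) + 1) • v)) ^ 2) * W₁ x (x + (L : ℝ) • v) := by
        rw [← Finset.sum_mul, ← mul_assoc]; gcongr
    _ ≤ L * ∑ j ∈ Finset.range L, ENNReal.ofReal ((g (x + (j : ℝ) • v)
          - g (x + ((j : ℝ) + 1) • v)) ^ 2)
            * (C * W₂ (x + (j : ℝ) • v) (x + ((j : ℝ) + 1) • v)) := by
        gcongr with j hj
        exact hW x v hx hy j (Finset.mem_range.1 hj)
    _ = L * C * ∑ j ∈ Finset.range L,
        (B ×ˢ B).indicator (uncurry fun x y => ENNReal.ofReal ((g x - g y) ^ 2) * W₂ x y)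
          (x + (j : ℝ) • v, x + ((j : ℝ) + 1) • v) := by
        rw [mul_assoc, Finset.mul_sum, Finset.mul_sum, Finset.mul_sum]
        refine Finset.sum_congr rfl fun j hj => ?_
        have hj := Finset.mem_range.1 hj
        rw [indicator_of_mem (mk_mem_prod (hz j hj.le) (by exact_mod_cast hz (j + 1) hj))]
        simp only [uncurry_apply_pair]
        ring

lemma mul_le_div_mul_min_of_quasiconcaveOn {B : Set E} {p : E → ℝ} (hpB : QuasiconcaveOn ℝ B p)
    (hp0 : ∀ x, 0 ≤ p x) {A : ℝ} (hpA : ∀ x, p x ≤ A) {q : E → E → ℝ} {L : ℕ} {qmin : ℝ}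
    (hqmin : 0 < qmin) {x v : E} (hx : x ∈ B) (hy : x + (L : ℝ) • v ∈ B)
    (hqL : ∀ u, qmin ≤ q u (u + v)) {j : ℕ} (hj : j < L) :
    p x * p (x + (L : ℝ) • v) ≤ A / qmin * (q (x + (j : ℝ) • v) (x + ((j : ℝ) + 1) • v)
      * min (p (x + (j : ℝ) • v)) (p (x + ((j : ℝ) + 1) • v))) := by
  set z := x + (j : ℝ) • v
  have hzv : x + ((j : ℝ) + 1) • v = z + v := by simp only [z, add_smul, one_smul, add_assoc]
  have hseg : ∀ a : ℝ, 0 ≤ a → a ≤ L → min (p x) (p (x + (L : ℝ) • v)) ≤ p (x + a • v) :=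
    fun a ha haL => hpB.min_le_of_mem_segment hx hy
      (add_smul_mem_segment ((Nat.cast_nonneg j).trans_lt (by exact_mod_cast hj)) ha haL x v)
  have hmin : min (p x) (p (x + (L : ℝ) • v)) ≤ min (p z) (p (z + v)) :=
    le_min (hseg j (by positivity) (by exact_mod_cast hj.le))
      (hzv ▸ hseg (j + 1) (by positivity) (by exact_mod_cast hj))
  have hA : 0 ≤ A := (hp0 x).trans (hpA x)
  rw [hzv]
  calc p x * p (x + (L : ℝ) • v)
      = min (p x) (p (x + (L : ℝ) • v)) * max (p x) (p (x + (L : ℝ) • v)) :=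
        (min_mul_max _ _).symm
    _ ≤ min (p z) (p (z + v)) * A :=
        mul_le_mul hmin (max_le (hpA _) (hpA _)) ((hp0 _).trans (le_max_left _ _))
          (le_min (hp0 _) (hp0 _))
    _ ≤ A / qmin * (q z (z + v) * min (p z) (p (z + v))) := by
        rw [div_mul_eq_mul_div, le_div_iff₀ hqmin]
        have := le_min (hp0 z) (hp0 (z + v))
        nlinarith [mul_le_mul_of_nonneg_left (hqL z) (mul_nonneg hA this)]

variable [FiniteDimensional ℝ E] [MeasurableSpace E] [BorelSpace E]
  (μ : Measure E) [μ.IsAddHaarMeasure]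

theorem MeasureTheory.Measure.lintegral_comp_smul (f : E → ℝ≥0∞) {r : ℝ} (hr : r ≠ 0) :
    ∫⁻ v, f (r • v) ∂μ = ENNReal.ofReal |(r ^ finrank ℝ E)⁻¹| * ∫⁻ y, f y ∂μ := by
  rw [← smul_eq_mul, ← lintegral_smul_measure, ← Measure.map_addHaar_smul μ hr]
  exact (lintegral_map_equiv f (Homeomorph.smulOfNeZero r hr).toMeasurableEquiv).symm

lemma measurable_add_smul_prod (a b : ℝ) :
    Measurable fun p : E × E => (p.1 + a • p.2, p.1 + b • p.2) :=
  (by fun_prop : Continuous fun p : E × E => (p.1 + a • p.2, p.1 + b • p.2)).measurable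

theorem lintegral_lintegral_comp_add_smul {F : E → E → ℝ≥0∞} (hF : Measurable (uncurry F))
    {a b : ℝ} (hab : a ≠ b) :
    ∫⁻ x, ∫⁻ v, F (x + a • v) (x + b • v) ∂μ ∂μ
      = ENNReal.ofReal |((b - a) ^ finrank ℝ E)⁻¹| * ∫⁻ x, ∫⁻ y, F x y ∂μ ∂μ := by
  have hmeas : ∀ a b : ℝ, Measurable fun p : E × E => F (p.1 + a • p.2) (p.1 + b • p.2) :=
    fun a b => hF.comp (measurable_add_smul_prod a b)
  calc ∫⁻ x, ∫⁻ v, F (x + a • v) (x + b • v) ∂μ ∂μ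
      = ∫⁻ v, ∫⁻ x, F (x + a • v) (x + b • v) ∂μ ∂μ :=
        lintegral_lintegral_swap (hmeas a b).aemeasurable
    _ = ∫⁻ v, ∫⁻ x, F (x + (0 : ℝ) • v) (x + (b - a) • v) ∂μ ∂μ := by
        refine lintegral_congr fun v => ?_
        rw [← lintegral_add_right_eq_self (fun x => F (x + (0 : ℝ) • v) (x + (b - a) • v)) (a • v)]
        simp only [zero_smul, add_zero, add_assoc, ← add_smul, add_sub_cancel]
    _ = ∫⁻ x, ∫⁻ v, F (x + (0 : ℝ) • v) (x + (b - a) • v) ∂μ ∂μ :=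
        (lintegral_lintegral_swap (hmeas 0 (b - a)).aemeasurable).symm
    _ = ENNReal.ofReal |((b - a) ^ finrank ℝ E)⁻¹| * ∫⁻ x, ∫⁻ y, F x y ∂μ ∂μ := by
        rw [← lintegral_const_mul' _ _ ENNReal.ofReal_ne_top]
        refine lintegral_congr fun x => ?_
        simp only [zero_smul, add_zero]
        rw [Measure.lintegral_comp_smul μ (fun y => F x (x + y)) (sub_ne_zero.2 hab.symm),
          lintegral_add_left_eq_self]

lemma lintegral_lintegral_sum_comp_add_smul {F : E → E → ℝ≥0∞} (hF : Measurable (uncurry F))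
    (L : ℕ) :
    ∫⁻ x, ∫⁻ v, ∑ j ∈ Finset.range L, F (x + (j : ℝ) • v) (x + ((j : ℝ) + 1) • v) ∂μ ∂μ
      = L * ∫⁻ x, ∫⁻ y, F x y ∂μ ∂μ := by
  have hmeas : ∀ j : ℕ,
      Measurable (uncurry fun x v => F (x + (j : ℝ) • v) (x + ((j : ℝ) + 1) • v)) :=
    fun j => hF.comp (measurable_add_smul_prod _ _)
  calc _ = ∫⁻ x, ∑ j ∈ Finset.range L,
        ∫⁻ v, F (x + (j : ℝ) • v) (x + ((j : ℝ) + 1) • v) ∂μ ∂μ :=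
        lintegral_congr fun x => lintegral_finsetSum _ fun j _ => (hmeas j).of_uncurry_left
    _ = ∑ j ∈ Finset.range L, ∫⁻ x, ∫⁻ v, F (x + (j : ℝ) • v) (x + ((j : ℝ) + 1) • v) ∂μ ∂μ :=
        lintegral_finsetSum _ fun j _ => (hmeas j).lintegral_prod_right'
    _ = ∑ _j ∈ Finset.range L, ∫⁻ x, ∫⁻ y, F x y ∂μ ∂μ := Finset.sum_congr rfl fun j _ => by
        rw [lintegral_lintegral_comp_add_smul μ hF (by linarith : (j : ℝ) ≠ j + 1)]
        simp
    _ = L * ∫⁻ x, ∫⁻ y, F x y ∂μ ∂μ := by simp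

theorem setLIntegral_setLIntegral_sq_sub_mul_le {B : Set E} (hB : Convex ℝ B)
    (hBm : MeasurableSet B) {g : E → ℝ} (hg : Measurable g) {W₁ W₂ : E → E → ℝ≥0∞}
    (hW₁ : Measurable (uncurry W₁)) (hW₂ : Measurable (uncurry W₂)) {L : ℕ} (hL : 0 < L)
    {C : ℝ≥0∞} (hW : ∀ x v, x ∈ B → x + (L : ℝ) • v ∈ B → ∀ j < L,
      W₁ x (x + (L : ℝ) • v) ≤ C * W₂ (x + (j : ℝ) • v) (x + ((j : ℝ) + 1) • v)) :
    ∫⁻ x in B, ∫⁻ y in B, ENNReal.ofReal ((g x - g y) ^ 2) * W₁ x y ∂μ ∂μ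
      ≤ L ^ (finrank ℝ E + 2) * C *
        ∫⁻ x in B, ∫⁻ y in B, ENNReal.ofReal ((g x - g y) ^ 2) * W₂ x y ∂μ ∂μ := by
  set F : (E → E → ℝ≥0∞) → E → E → ℝ≥0∞ := fun W x y =>
    (B ×ˢ B).indicator (uncurry fun x y => ENNReal.ofReal ((g x - g y) ^ 2) * W x y) (x, y)
  have hF : ∀ W : E → E → ℝ≥0∞, Measurable (uncurry W) → Measurable (uncurry (F W)) :=
    fun W hW => ((ENNReal.measurable_ofReal.comp
      (((hg.comp measurable_fst).sub (hg.comp measurable_snd)).pow_const 2)).mul hW).indicator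
      (hBm.prod hBm)
  have hL0 : (L : ℝ≥0∞) ≠ 0 := by exact_mod_cast hL.ne'
  have hscale : ∫⁻ x, ∫⁻ y, F W₁ x y ∂μ ∂μ
      = L ^ finrank ℝ E * ∫⁻ x, ∫⁻ v, F W₁ (x + (0 : ℝ) • v) (x + (L : ℝ) • v) ∂μ ∂μ := by
    rw [lintegral_lintegral_comp_add_smul μ (hF W₁ hW₁) (by exact_mod_cast hL.ne), sub_zero,
      ← mul_assoc, abs_inv, abs_pow, Nat.abs_cast, ENNReal.ofReal_inv_of_pos (by positivity),
      ENNReal.ofReal_pow (Nat.cast_nonneg _), ENNReal.ofReal_natCast,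
      ENNReal.mul_inv_cancel (pow_ne_zero _ hL0) (by finiteness), one_mul]
  simp_rw [← lintegral_lintegral_indicator_prod hBm hBm]
  calc ∫⁻ x, ∫⁻ y, F W₁ x y ∂μ ∂μ
      ≤ L ^ finrank ℝ E * ∫⁻ x, ∫⁻ v, L * C * ∑ j ∈ Finset.range L,
          F W₂ (x + (j : ℝ) • v) (x + ((j : ℝ) + 1) • v) ∂μ ∂μ := by
        rw [hscale]
        gcongr with x v
        simpa using indicator_sq_sub_mul_le_sum hB hL hW x v
    _ = L ^ finrank ℝ E * (L * C * ∫⁻ x, ∫⁻ v, ∑ j ∈ Finset.range L,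
          F W₂ (x + (j : ℝ) • v) (x + ((j : ℝ) + 1) • v) ∂μ ∂μ) := by
        have hsum : Measurable (uncurry fun x v => ∑ j ∈ Finset.range L,
            F W₂ (x + (j : ℝ) • v) (x + ((j : ℝ) + 1) • v)) :=
          Finset.measurable_sum _ fun j _ => (hF W₂ hW₂).comp (measurable_add_smul_prod _ _)
        have hsum_x : Measurable fun x => ∫⁻ v, ∑ j ∈ Finset.range L,
            F W₂ (x + (j : ℝ) • v) (x + ((j : ℝ) + 1) • v) ∂μ := hsum.lintegral_prod_right'
        rw [← lintegral_const_mul _ hsum_x]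
        exact congrArg _ (lintegral_congr fun x => lintegral_const_mul _ hsum.of_uncurry_left)
    _ = L ^ (finrank ℝ E + 2) * C * ∫⁻ x, ∫⁻ y, F W₂ x y ∂μ ∂μ := by
        rw [lintegral_lintegral_sum_comp_add_smul μ (hF W₂ hW₂)]
        ring

theorem setIntegral_sq_sub_mul_le_of_quasiconcaveOn {B : Set E} (hBm : MeasurableSet B)
    (hBfin : μ B ≠ ∞) {p : E → ℝ} (hpB : QuasiconcaveOn ℝ B p) (hp : Measurable p)
    (hp0 : ∀ x, 0 ≤ p x) {A : ℝ} (hpA : ∀ x, p x ≤ A) {q : E → E → ℝ}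
    (hq : Measurable (uncurry q)) (hq0 : ∀ x y, 0 ≤ q x y) {qmax : ℝ}
    (hqmax : ∀ x y, q x y ≤ qmax) {L : ℕ} (hL : 0 < L) {qmin : ℝ} (hqmin : 0 < qmin)
    (hqL : ∀ x v, x ∈ B → x + (L : ℝ) • v ∈ B → ∀ u, qmin ≤ q u (u + v)) {g : E → ℝ}
    (hg : Measurable g) (hgp : ∫⁻ x, ENNReal.ofReal (g x ^ 2) * ENNReal.ofReal (p x) ∂μ ≠ ∞) :
    ∫ x in B, ∫ y in B, (g x - g y) ^ 2 * p x * p y ∂μ ∂μ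
      ≤ L ^ (finrank ℝ E + 2) * (A / qmin) *
        ∫ x in B, ∫ y in B, (g x - g y) ^ 2 * q x y * min (p x) (p y) ∂μ ∂μ := by
  have hA : 0 ≤ A := (hp0 0).trans (hpA 0)
  set W₁ : E → E → ℝ≥0∞ := fun x y => ENNReal.ofReal (p x * p y)
  set W₂ : E → E → ℝ≥0∞ := fun x y => ENNReal.ofReal (q x y * min (p x) (p y))
  have hq' : Measurable fun z : E × E => q z.1 z.2 := hq
  have hW₁ : Measurable (uncurry W₁) := by unfold W₁ uncurry; fun_prop
  have hW₂ : Measurable (uncurry W₂) := by unfold W₂ uncurry; fun_prop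
  have hW : ∀ x v, x ∈ B → x + (L : ℝ) • v ∈ B → ∀ j < L, W₁ x (x + (L : ℝ) • v)
      ≤ ENNReal.ofReal (A / qmin) * W₂ (x + (j : ℝ) • v) (x + ((j : ℝ) + 1) • v) := by
    intro x v hx hy j hj
    rw [← ENNReal.ofReal_mul (div_nonneg hA hqmin.le)]
    exact ENNReal.ofReal_le_ofReal
      (mul_le_div_mul_min_of_quasiconcaveOn hpB hp0 hpA hqmin hx hy (hqL x v hx hy) hj)
  have hcore := setLIntegral_setLIntegral_sq_sub_mul_le μ hpB.convex hBm hg hW₁ hW₂ hL hW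
  have hD : ∫⁻ x in B, ∫⁻ y in B, ENNReal.ofReal ((g x - g y) ^ 2) * W₂ x y ∂μ ∂μ ≠ ∞ := by
    refine setLIntegral_setLIntegral_sq_sub_mul_ne_top hBfin (by fun_prop) hgp
      (ENNReal.ofReal_ne_top (r := qmax)) fun x y => ?_
    rw [← ENNReal.ofReal_mono.map_min, ← ENNReal.ofReal_mul ((hq0 x y).trans (hqmax x y))]
    exact ENNReal.ofReal_le_ofReal (mul_le_mul_of_nonneg_right (hqmax x y)
      (le_min (hp0 x) (hp0 y)))
  have hsplit : ∀ x y (w : ℝ), ENNReal.ofReal ((g x - g y) ^ 2 * w)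
      = ENNReal.ofReal ((g x - g y) ^ 2) * ENNReal.ofReal w :=
    fun _ _ _ => ENNReal.ofReal_mul (sq_nonneg _)
  have hF₁ : Measurable (uncurry fun x y => (g x - g y) ^ 2 * p x * p y) := by
    unfold uncurry; fun_prop
  have hF₂ : Measurable (uncurry fun x y => (g x - g y) ^ 2 * q x y * min (p x) (p y)) := by
    unfold uncurry; fun_prop
  refine setIntegral_setIntegral_le_of_setLIntegral hF₁ hF₂
    (fun x y => by have := hp0 x; have := hp0 y; positivity)
    (fun x y => by have := hq0 x y; have := le_min (hp0 x) (hp0 y); positivity)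
    (by positivity) (by simpa only [mul_assoc, hsplit] using hD) ?_
  rw [ENNReal.ofReal_mul (by positivity), ENNReal.ofReal_pow (Nat.cast_nonneg _),
    ENNReal.ofReal_natCast]
  simpa only [mul_assoc, hsplit] using hcore

end HaarMeasure

section Gaussian

variable {d : ℕ} {Sig : Matrix (Fin d) (Fin d) ℝ}

lemma quadForm_nonneg (hSig : Sig.PosDef) (v : Fin d → ℝ) : 0 ≤ quadForm Sig v := by
  simpa [quadForm] using hSig.inv.posSemidef.dotProduct_mulVec_nonneg v

lemma convexOn_quadForm (hSig : Sig.PosDef) : ConvexOn ℝ univ (quadForm Sig) := by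
  refine ⟨convex_univ, fun x _ y _ a b ha hb hab => ?_⟩
  obtain rfl : b = 1 - a := by linarith
  have hxy := quadForm_nonneg hSig (x - y)
  simp only [quadForm, mulVec_add, mulVec_smul, mulVec_sub, dotProduct_add, dotProduct_smul,
    add_dotProduct, smul_dotProduct, dotProduct_sub, sub_dotProduct, smul_eq_mul] at hxy ⊢
  nlinarith [mul_nonneg (mul_nonneg ha hb) hxy, dotProduct_comm x (Sig⁻¹ *ᵥ y)]

lemma quasiconcaveOn_gaussDens (hSig : Sig.PosDef) {β : ℝ} (hβ : 0 ≤ β) (μ : Fin d → ℝ) :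
    QuasiconcaveOn ℝ univ (gaussDens Sig β μ) := by
  have hconv : ConvexOn ℝ univ fun x => quadForm Sig (x - μ) := by
    simpa [Function.comp_def, sub_eq_neg_add] using (convexOn_quadForm hSig).translate_right (-μ)
  have hanti : Antitone fun q => (β / (2 * π)) ^ ((d : ℝ) / 2) / √Sig.det * exp (-(β / 2) * q) :=
    fun q q' h => mul_le_mul_of_nonneg_left (exp_le_exp.2 (by nlinarith)) (by positivity)
  have h := hconv.quasiconvexOn.antitone_comp hanti
  exact h

lemma gaussDens_pos (hSig : Sig.PosDef) {β : ℝ} (hβ : 0 < β) (μ x : Fin d → ℝ) :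
    0 < gaussDens Sig β μ x := by
  have := hSig.det_pos
  unfold gaussDens
  positivity

lemma gaussDens_le (hSig : Sig.PosDef) {β : ℝ} (hβ : 0 ≤ β) (μ x : Fin d → ℝ) :
    gaussDens Sig β μ x ≤ (β / (2 * π)) ^ ((d : ℝ) / 2) / √Sig.det := by
  refine mul_le_of_le_one_right (by positivity) (exp_le_one_iff.2 ?_)
  nlinarith [quadForm_nonneg hSig (x - μ)]

lemma measurable_gaussDens (Sig : Matrix (Fin d) (Fin d) ℝ) (β : ℝ) (μ : Fin d → ℝ) :
    Measurable (gaussDens Sig β μ) := by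
  unfold gaussDens quadForm
  fun_prop

lemma pow_le_det_of_isLeast (hSig : Sig.PosDef) {γ : ℝ}
    (hγ : IsLeast (range hSig.isHermitian.eigenvalues) γ) : 0 < γ ∧ γ ^ d ≤ Sig.det := by
  obtain ⟨⟨i, rfl⟩, hle⟩ := hγ
  refine ⟨hSig.eigenvalues_pos i, ?_⟩
  rw [hSig.isHermitian.det_eq_prod_eigenvalues]
  simpa using Finset.prod_le_prod (s := Finset.univ) (fun _ _ => (hSig.eigenvalues_pos i).le)
    fun j _ => hle ⟨j, rfl⟩

end Gaussian

section Euclidean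

variable {d : ℕ}

lemma euclNorm_eq_norm (v : Fin d → ℝ) : euclNorm v = ‖WithLp.toLp 2 v‖ := by
  simp [EuclideanSpace.norm_eq, euclNorm]

lemma convex_setOf_euclNorm_le (R : ℝ) : Convex ℝ {x : Fin d → ℝ | euclNorm x ≤ R} := by
  have h : {x : Fin d → ℝ | euclNorm x ≤ R}
      = (WithLp.linearEquiv 2 ℝ (Fin d → ℝ)).symm.toLinearMap ⁻¹' Metric.closedBall 0 R := by
    ext x
    simp [euclNorm_eq_norm]
  rw [h]
  exact (convex_closedBall _ R).linear_preimage _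

lemma continuous_euclNorm : Continuous (euclNorm (d := d)) := by
  unfold euclNorm; fun_prop

lemma volume_setOf_euclNorm_le_ne_top (R : ℝ) : volume {x : Fin d → ℝ | euclNorm x ≤ R} ≠ ⊤ := by
  refine (Bornology.IsBounded.measure_lt_top ?_).ne
  refine (Metric.isBounded_closedBall (x := (0 : Fin d → ℝ)) (r := R)).subset fun x hx => ?_
  replace hx : ‖WithLp.toLp 2 x‖ ≤ R := (euclNorm_eq_norm x) ▸ hx
  rw [Metric.mem_closedBall, dist_zero_right, pi_norm_le_iff_of_nonneg ((norm_nonneg _).trans hx)]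
  exact fun k => (PiLp.norm_apply_le (WithLp.toLp 2 x) k).trans hx

lemma smul_euclNorm_le_of_mem {R L : ℝ} (hL : 0 ≤ L) {x v : Fin d → ℝ} (hx : euclNorm x ≤ R)
    (hy : euclNorm (x + L • v) ≤ R) : L * euclNorm v ≤ 2 * R := by
  rw [euclNorm_eq_norm] at hx hy ⊢
  have := norm_sub_le (WithLp.toLp 2 (x + L • v)) (WithLp.toLp 2 x)
  rw [← WithLp.toLp_sub, add_sub_cancel_left, WithLp.toLp_smul, norm_smul, Real.norm_of_nonneg hL]
    at this
  linarith

lemma le_propDens_add {η r : ℝ} (hη : 0 < η) {v : Fin d → ℝ} (hv : euclNorm v ≤ r)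
    (u : Fin d → ℝ) :
    (2 * π * η) ^ (-(d : ℝ) / 2) * exp (-r ^ 2 / (2 * η)) ≤ propDens d η u (u + v) := by
  have hv2 : ∑ k, v k ^ 2 ≤ r ^ 2 := by
    rw [← Real.sq_sqrt (Finset.sum_nonneg fun k _ => sq_nonneg (v k))]
    exact pow_le_pow_left₀ (Real.sqrt_nonneg _) hv 2
  unfold propDens
  simp only [Pi.add_apply, add_sub_cancel_left]
  gcongr ?_ * exp ?_
  exact div_le_div_of_nonneg_right (neg_le_neg hv2) (by positivity)

lemma propDens_nonneg {η : ℝ} (hη : 0 ≤ η) (x y : Fin d → ℝ) : 0 ≤ propDens d η x y := by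
  unfold propDens; positivity

lemma propDens_le {η : ℝ} (hη : 0 ≤ η) (x y : Fin d → ℝ) :
    propDens d η x y ≤ (2 * π * η) ^ (-(d : ℝ) / 2) := by
  refine mul_le_of_le_one_right (by positivity) (exp_le_one_iff.2 ?_)
  exact div_nonpos_of_nonpos_of_nonneg (neg_nonpos.2 (by positivity)) (by positivity)

lemma measurable_propDens (η : ℝ) : Measurable (uncurry (propDens d η)) := by
  unfold propDens uncurry; fun_prop

end Euclidean

lemma restVarDens_congr_ae {d : ℕ} (ρ : (Fin d → ℝ) → ℝ) (X0 : Set (Fin d → ℝ))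
    {g g' : (Fin d → ℝ) → ℝ} (h : g =ᵐ[volume] g') : restVarDens ρ X0 g = restVarDens ρ X0 g' := by
  unfold restVarDens
  congr 1
  refine integral_congr_ae ((ae_restrict_of_ae h).mono fun x hx => ?_)
  refine integral_congr_ae ((ae_restrict_of_ae h).mono fun y hy => ?_)
  simp only [hx, hy]

lemma mhRestDirichlet_congr_ae {d : ℕ} (η : ℝ) (ρ : (Fin d → ℝ) → ℝ) (X0 : Set (Fin d → ℝ))
    {g g' : (Fin d → ℝ) → ℝ} (h : g =ᵐ[volume] g') :
    mhRestDirichlet η ρ X0 g = mhRestDirichlet η ρ X0 g' := by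
  unfold mhRestDirichlet
  congr 1
  refine integral_congr_ae ((ae_restrict_of_ae h).mono fun x hx => ?_)
  refine integral_congr_ae ((ae_restrict_of_ae h).mono fun y hy => ?_)
  simp only [hx, hy]

lemma gap_constant_sq_eq {d L : ℕ} (hL : 1 ≤ L) {γ detS β R η : ℝ} (hγ : 0 ≤ γ)
    (hdet : 0 < detS) (hβ : 0 ≤ β) (hR : 0 < R) (hη : 0 < η) :
    (γ ^ ((d : ℝ) / 2) * η ^ ((3 : ℝ) / 2) / (13 * R ^ (d + 3)) *
      ((L : ℝ) ^ (d + 2) * ((β / (2 * π)) ^ ((d : ℝ) / 2) / √detS /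
        ((2 * π * η) ^ (-(d : ℝ) / 2) * exp (-(2 * R / L) ^ 2 / (2 * η)))))) ^ 2
      = γ ^ d / detS * β ^ d * ((L : ℝ) ^ (2 * (d + 2)) * exp (4 * (R ^ 2 / η) / L ^ 2)
        / (169 * (R ^ 2 / η) ^ (d + 2 + 1))) := by
  have hL0 : (0 : ℝ) < L := by exact_mod_cast hL
  set X := exp (4 * (R ^ 2 / η) / L ^ 2)
  set T := R ^ 2 / η
  have hc : (γ ^ ((d : ℝ) / 2) * η ^ ((3 : ℝ) / 2) / (13 * R ^ (d + 3))) ^ 2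
      = γ ^ d * η ^ 3 / (169 * (T ^ (d + 2 + 1) * η ^ (d + 3))) := by
    rw [div_pow, mul_pow, mul_pow, rpow_natCast_div_two_sq hγ,
      (by exact_mod_cast rpow_natCast_div_two_sq hη.le 3 : (η ^ ((3 : ℝ) / 2)) ^ 2 = η ^ 3),
      div_pow, ← pow_mul, ← pow_mul, div_mul_cancel₀ _ (by positivity)]
    ring_nf
  have hA : ((β / (2 * π)) ^ ((d : ℝ) / 2) / √detS) ^ 2 = (β / (2 * π)) ^ d / detS := by
    rw [div_pow, rpow_natCast_div_two_sq (by positivity), sq_sqrt hdet.le]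
  have hq : ((2 * π * η) ^ (-(d : ℝ) / 2) * exp (-(2 * R / L) ^ 2 / (2 * η))) ^ 2
      = ((2 * π * η) ^ d)⁻¹ * X⁻¹ := by
    rw [mul_pow, rpow_neg_natCast_div_two_sq (by positivity), ← exp_nat_mul, ← exp_neg]
    congr 2
    field_simp
    ring
  have hβη : (β / (2 * π)) ^ d * (2 * π * η) ^ d = β ^ d * η ^ d := by
    rw [← mul_pow, ← mul_pow]; congr 1; field_simp
  rw [mul_pow, hc, mul_pow, div_pow ((β / (2 * π)) ^ ((d : ℝ) / 2) / √detS), hA, hq, ← pow_mul,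
    mul_comm (d + 2)]
  field_simp
  linear_combination γ ^ d * η ^ 3 * X / T ^ (d + 2 + 1) * hβη

lemma gap_constant_le {d L : ℕ} (hL : 1 ≤ L) {γ detS β R η : ℝ} (hγ : 0 < γ) (hγd : γ ^ d ≤ detS)
    (hβ0 : 0 < β) (hβ1 : β ≤ 1) (hR : 0 < R) (hη : 0 < η)
    (hkey : (L : ℝ) ^ (2 * (d + 2)) * exp (4 * (R ^ 2 / η) / L ^ 2)
      ≤ 169 * (R ^ 2 / η) ^ (d + 2 + 1)) :
    γ ^ ((d : ℝ) / 2) * η ^ ((3 : ℝ) / 2) / (13 * R ^ (d + 3)) *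
      ((L : ℝ) ^ (d + 2) * ((β / (2 * π)) ^ ((d : ℝ) / 2) / √detS /
        ((2 * π * η) ^ (-(d : ℝ) / 2) * exp (-(2 * R / L) ^ 2 / (2 * η))))) ≤ 1 := by
  have hdet : 0 < detS := (pow_pos hγ d).trans_le hγd
  refine (pow_le_one_iff_of_nonneg (by positivity) two_ne_zero).1 ?_
  rw [gap_constant_sq_eq hL hγ.le hdet hβ0.le hR hη]
  calc _ ≤ (1 : ℝ) * 1 * 1 := by
        gcongr
        · exact (div_le_one hdet).2 hγd
        · exact pow_le_one₀ hβ0.le hβ1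
        · exact (div_le_one (by positivity)).2 hkey
    _ = 1 := by norm_num

lemma mhRestDirichlet_nonneg {d : ℕ} {η : ℝ} (hη : 0 ≤ η) {ρ : (Fin d → ℝ) → ℝ}
    (hρ : ∀ x, 0 ≤ ρ x) (X0 : Set (Fin d → ℝ)) (g : (Fin d → ℝ) → ℝ) :
    0 ≤ mhRestDirichlet η ρ X0 g :=
  mul_nonneg (by norm_num) (integral_nonneg fun x => integral_nonneg fun y =>
    mul_nonneg (mul_nonneg (sq_nonneg _) (propDens_nonneg hη x y)) (le_min (hρ x) (hρ y)))

lemma restVarDens_gaussDens_le {d : ℕ} (μ : Fin d → ℝ) {Sig : Matrix (Fin d) (Fin d) ℝ}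
    (hSig : Sig.PosDef) {β η : ℝ} (hβ : 0 < β) (hη : 0 < η) (R : ℝ) {L : ℕ} (hL : 1 ≤ L)
    {g : (Fin d → ℝ) → ℝ} (hg : Measurable g)
    (hgp : ∫⁻ x, ENNReal.ofReal (g x ^ 2) * ENNReal.ofReal (gaussDens Sig β μ x) ≠ ⊤) :
    restVarDens (gaussDens Sig β μ) {x | euclNorm x ≤ R} g
      ≤ L ^ (d + 2) * ((β / (2 * π)) ^ ((d : ℝ) / 2) / √Sig.det /
        ((2 * π * η) ^ (-(d : ℝ) / 2) * exp (-(2 * R / L) ^ 2 / (2 * η)))) *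
        mhRestDirichlet η (gaussDens Sig β μ) {x | euclNorm x ≤ R} g := by
  have hL0 : (0 : ℝ) < L := by exact_mod_cast hL
  have hcmp := setIntegral_sq_sub_mul_le_of_quasiconcaveOn volume
    (measurableSet_le continuous_euclNorm.measurable measurable_const)
    (volume_setOf_euclNorm_le_ne_top R)
    (Convex.quasiconcaveOn_restrict (quasiconcaveOn_gaussDens hSig hβ.le μ) (subset_univ _)
      (convex_setOf_euclNorm_le R))
    (measurable_gaussDens Sig β μ) (fun x => (gaussDens_pos hSig hβ μ x).le)
    (gaussDens_le hSig hβ.le μ) (measurable_propDens η) (propDens_nonneg hη.le)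
    (propDens_le hη.le) hL (by positivity)
    (fun x v hx hy => le_propDens_add hη (r := 2 * R / L)
      (by rw [le_div_iff₀ hL0, mul_comm]; exact smul_euclNorm_le_of_mem hL0.le hx hy)) hg hgp
  rw [finrank_fin_fun] at hcmp
  unfold restVarDens mhRestDirichlet
  linarith

theorem stmt11 (d : ℕ) (hd : 0 < d)
    (μ : Fin d → ℝ)
    (Sig : Matrix (Fin d) (Fin d) ℝ) (hSig : Sig.PosDef)
    (γmin : ℝ) (hγmin : IsLeast (Set.range hSig.isHermitian.eigenvalues) γmin)
    (β : ℝ) (hβ0 : 0 < β) (hβ1 : β ≤ 1)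
    (R η : ℝ) (hR : 0 < R) (hη0 : 0 < η) (hηR : η ≤ R ^ 2) :
    ∀ g : (Fin d → ℝ) → ℝ,
      MemLp g 2 (volume.withDensity fun x => ENNReal.ofReal (gaussDens Sig β μ x)) →
      (γmin ^ ((d : ℝ) / 2) * η ^ ((3 : ℝ) / 2) / (13 * R ^ (d + 3))) *
          restVarDens (gaussDens Sig β μ) {x | euclNorm x ≤ R} g
        ≤ mhRestDirichlet η (gaussDens Sig β μ) {x | euclNorm x ≤ R} g := by
  intro g hg
  have hp := measurable_gaussDens Sig β μ
  have hp0 : ∀ x, 0 < gaussDens Sig β μ x := gaussDens_pos hSig hβ0 μ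
  obtain ⟨g', hg'm, hgg'⟩ := hg.aestronglyMeasurable
  have hae : g =ᵐ[volume] g' := (withDensity_ae_eq hp.ennreal_ofReal.aemeasurable
    (ae_of_all _ fun x => (ENNReal.ofReal_pos.2 (hp0 x)).ne')).1 hgg'
  rw [restVarDens_congr_ae _ _ hae, mhRestDirichlet_congr_ae _ _ _ hae]
  obtain ⟨hγ, hγdet⟩ := pow_le_det_of_isLeast hSig hγmin
  obtain ⟨L, hL, hkey⟩ := exists_pow_mul_exp_le (m := d + 2) (by omega) ((one_le_div hη0).2 hηR)
  have hcmp := restVarDens_gaussDens_le μ hSig hβ0 hη0 R hL hg'm.measurable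
    ((hg.ae_eq hgg').lintegral_sq_mul_ne_top hp.ennreal_ofReal hg'm.measurable)
  have hconst := gap_constant_le hL hγ hγdet hβ0 hβ1 hR hη0 hkey
  have hc : 0 ≤ γmin ^ ((d : ℝ) / 2) * η ^ ((3 : ℝ) / 2) / (13 * R ^ (d + 3)) := by
    have := rpow_nonneg hγ.le ((d : ℝ) / 2); positivity
  have hD := mhRestDirichlet_nonneg hη0.le (fun x => (hp0 x).le) {x | euclNorm x ≤ R} g'
  nlinarith [mul_le_mul_of_nonneg_left hcmp hc, mul_le_mul_of_nonneg_right hconst hD]
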